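/- arXiv:2104.08674 — 3 statements merged into one kernel-verified Lean document; each statement's English description precedes it below -/
import Mathlib

section
/- Let F be an algebraically closed field of characteristic p > 0, n ≥ 1, and let g ∈ GL_n(F) be a nontrivial element, acting on the Weyl algebra A_n(F) by the symplectic linear action and hence on Frac(A_n(F)). Then the induced automorphism of Frac(A_n(F)) is outer: there is no nonzero q ∈ Frac(A_n(F)) such that g·a = q a q^{-1} for all a ∈ Frac(A_n(F)). -/
set_option synthInstance.maxHeartbeats 1000000
set_option maxHeartbeats 4000000

open scoped nonZeroDivisors
open Matrix

/-- The defining relations of the `n`-th Weyl algebra, on generators indexed by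
`Fin n ⊕ Fin n` (`Sum.inl i ↦ xᵢ`, `Sum.inr i ↦ yᵢ`):
`xᵢxⱼ = xⱼxᵢ`, `yᵢyⱼ = yⱼyᵢ`, `yᵢxⱼ = xⱼyᵢ + δᵢⱼ`. -/
inductive WeylRel (R : Type*) [CommRing R] (n : ℕ) :
    FreeAlgebra R (Fin n ⊕ Fin n) → FreeAlgebra R (Fin n ⊕ Fin n) → Prop
  | xx (i j : Fin n) : WeylRel R n
      (FreeAlgebra.ι R (Sum.inl i) * FreeAlgebra.ι R (Sum.inl j))
      (FreeAlgebra.ι R (Sum.inl j) * FreeAlgebra.ι R (Sum.inl i))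
  | yy (i j : Fin n) : WeylRel R n
      (FreeAlgebra.ι R (Sum.inr i) * FreeAlgebra.ι R (Sum.inr j))
      (FreeAlgebra.ι R (Sum.inr j) * FreeAlgebra.ι R (Sum.inr i))
  | yx (i j : Fin n) : WeylRel R n
      (FreeAlgebra.ι R (Sum.inr i) * FreeAlgebra.ι R (Sum.inl j))
      (FreeAlgebra.ι R (Sum.inl j) * FreeAlgebra.ι R (Sum.inr i)
        + if i = j then 1 else 0)

/-- The `n`-th Weyl algebra `A_n(R)`. -/
abbrev WeylAlgebra (R : Type*) [CommRing R] (n : ℕ) : Type _ := RingQuot (WeylRel R n)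

/-- The generator `xᵢ` of the Weyl algebra. -/
noncomputable def wX (R : Type*) [CommRing R] (n : ℕ) (i : Fin n) : WeylAlgebra R n :=
  RingQuot.mkAlgHom R (WeylRel R n) (FreeAlgebra.ι R (Sum.inl i))

/-- The generator `yᵢ` of the Weyl algebra. -/
noncomputable def wY (R : Type*) [CommRing R] (n : ℕ) (i : Fin n) : WeylAlgebra R n :=
  RingQuot.mkAlgHom R (WeylRel R n) (FreeAlgebra.ι R (Sum.inr i))

/-- The skew field of fractions `Frac(A_n(F))` of the Weyl algebra, realized as the Ore
localization of `A_n(F)` at the Ore set of its nonzero elements (it is a division ring,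
given that `A_n(F)` is a noetherian domain). -/
abbrev WeylFrac (F : Type*) [Field F] (n : ℕ)
    [OreLocalization.OreSet (WeylAlgebra F n)⁰] : Type _ :=
  OreLocalization (WeylAlgebra F n)⁰ (WeylAlgebra F n)

/-- The canonical inclusion of the Weyl algebra into its skew field of fractions. -/
noncomputable def weylToFrac (F : Type*) [Field F] (n : ℕ)
    [OreLocalization.OreSet (WeylAlgebra F n)⁰] :
    WeylAlgebra F n →+* WeylFrac F n :=
  OreLocalization.numeratorRingHom

section Fixed
variable {G : Type*} [Group G]

/-- The fixed subalgebra (`Q^G`) of an action of `G` by `F`-algebra automorphisms. -/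
def fixedSubalgebra (F : Type*) {Q : Type*} [CommSemiring F] [Semiring Q] [Algebra F Q]
    (ρ : G →* (Q ≃ₐ[F] Q)) : Subalgebra F Q where
  carrier := {a | ∀ g, ρ g a = a}
  algebraMap_mem' := fun r g => (ρ g).commutes r
  add_mem' := fun ha hb g => by rw [_root_.map_add, ha g, hb g]
  mul_mem' := fun ha hb g => by rw [_root_.map_mul, ha g, hb g]

/-- The fixed sub-division-ring (`Q^G`) of an action of `G` by `F`-algebra automorphisms
of a division ring, as a `Subfield` in Mathlib's sense (a sub-division-ring). -/
def fixedSubfield (F : Type*) {Q : Type*} [CommSemiring F] [DivisionRing Q] [Algebra F Q]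
    (ρ : G →* (Q ≃ₐ[F] Q)) : Subfield Q where
  carrier := {a | ∀ g, ρ g a = a}
  one_mem' := fun g => map_one _
  zero_mem' := fun g => map_zero _
  add_mem' := fun ha hb g => by rw [_root_.map_add, ha g, hb g]
  mul_mem' := fun ha hb g => by rw [_root_.map_mul, ha g, hb g]
  neg_mem' := fun ha g => by rw [map_neg, ha g]
  inv_mem' := fun a ha g => by rw [map_inv₀, ha g]

end Fixed

/-- A field extension `K/F` is *stably rational over `F`* if some rational function field
`K(t₁,…,t_m)` over `K` is isomorphic, as an `F`-algebra, to a rational function field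
`F(z₁,…,z_N)` over `F` in finitely many variables. -/
def IsStablyRational (F K : Type*) [Field F] [Field K] [Algebra F K] : Prop :=
  ∃ m N : ℕ, Nonempty
    (FractionRing (MvPolynomial (Fin m) K) ≃ₐ[F] FractionRing (MvPolynomial (Fin N) F))

section Actions

variable {F : Type*} [Field F] {n : ℕ}

/-- `ρ` is the symplectic action of the subgroup `G ≤ GLₙ(F)` on `Frac(A_n(F))`:
`g` maps `xⱼ` to `∑ᵢ gᵢⱼ xᵢ` and `yⱼ` to `∑ᵢ ((gᵀ)⁻¹)ᵢⱼ yᵢ = ∑ᵢ (g⁻¹)ⱼᵢ yᵢ`.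
(Such an action exists and is unique, since the extension of the linear action from
`A_n(F)` to its skew field of fractions is unique.) -/
def IsWeylFracAction [OreLocalization.OreSet (WeylAlgebra F n)⁰]
    (G : Subgroup (GL (Fin n) F)) (ρ : G →* (WeylFrac F n ≃ₐ[F] WeylFrac F n)) : Prop :=
  ∀ g : G,
    (∀ j, ρ g (weylToFrac F n (wX F n j)) =
      ∑ i, ((g : GL (Fin n) F) : Matrix (Fin n) (Fin n) F) i j • weylToFrac F n (wX F n i)) ∧
    (∀ j, ρ g (weylToFrac F n (wY F n j)) =
      ∑ i, (((g : GL (Fin n) F)⁻¹ : GL (Fin n) F) : Matrix (Fin n) (Fin n) F) j i •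
        weylToFrac F n (wY F n i))

/-- `ρ` is the symplectic action of a subgroup `G ≤ GLₙ(ℤ)` on `Frac(A_n(F))`, acting
through the (entrywise) reduction map `GLₙ(ℤ) → GLₙ(F)`. -/
def IsWeylFracActionInt [OreLocalization.OreSet (WeylAlgebra F n)⁰]
    (G : Subgroup (GL (Fin n) ℤ)) (ρ : G →* (WeylFrac F n ≃ₐ[F] WeylFrac F n)) : Prop :=
  ∀ g : G,
    (∀ j, ρ g (weylToFrac F n (wX F n j)) =
      ∑ i, (((g : GL (Fin n) ℤ) : Matrix (Fin n) (Fin n) ℤ) i j : F) •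
        weylToFrac F n (wX F n i)) ∧
    (∀ j, ρ g (weylToFrac F n (wY F n j)) =
      ∑ i, ((((g : GL (Fin n) ℤ)⁻¹ : GL (Fin n) ℤ) : Matrix (Fin n) (Fin n) ℤ) j i : F) •
        weylToFrac F n (wY F n i))

/-- `ρ` is the linear action of the subgroup `G ≤ GLₙ(F)` on the rational function field
`F(x₁,…,xₙ)`: `g` maps `xⱼ` to `∑ᵢ gᵢⱼ xᵢ`. -/
def IsMvRatAction (G : Subgroup (GL (Fin n) F))
    (ρ : G →* (FractionRing (MvPolynomial (Fin n) F) ≃ₐ[F]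
      FractionRing (MvPolynomial (Fin n) F))) : Prop :=
  ∀ g : G, ∀ j,
    ρ g (algebraMap (MvPolynomial (Fin n) F) (FractionRing (MvPolynomial (Fin n) F))
        (MvPolynomial.X j)) =
      ∑ i, ((g : GL (Fin n) F) : Matrix (Fin n) (Fin n) F) i j •
        algebraMap (MvPolynomial (Fin n) F) (FractionRing (MvPolynomial (Fin n) F))
          (MvPolynomial.X i)

/-- `ρ` is the linear action of a subgroup `G ≤ GLₙ(ℤ)` on the rational function field
`F(x₁,…,xₙ)`, acting through the (entrywise) reduction map `GLₙ(ℤ) → GLₙ(F)`. -/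
def IsMvRatActionInt (G : Subgroup (GL (Fin n) ℤ))
    (ρ : G →* (FractionRing (MvPolynomial (Fin n) F) ≃ₐ[F]
      FractionRing (MvPolynomial (Fin n) F))) : Prop :=
  ∀ g : G, ∀ j,
    ρ g (algebraMap (MvPolynomial (Fin n) F) (FractionRing (MvPolynomial (Fin n) F))
        (MvPolynomial.X j)) =
      ∑ i, (((g : GL (Fin n) ℤ) : Matrix (Fin n) (Fin n) ℤ) i j : F) •
        algebraMap (MvPolynomial (Fin n) F) (FractionRing (MvPolynomial (Fin n) F))
          (MvPolynomial.X i)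

end Actions

/-!
The `p`-th powers `xⱼᵖ` of the generators are central in `A_n(F)`, hence in `Frac(A_n(F))`, so an
inner automorphism fixes them. On the other hand, since the `xᵢ` commute, the automorphism induced
by `g` sends `xⱼᵖ` to `∑ᵢ gᵢⱼᵖ xᵢᵖ`. The `xᵢᵖ` are linearly independent (their images in the
polynomial representation are distinct monomials), so `gᵢⱼᵖ = δᵢⱼ`, and injectivity of Frobenius
forces `g = 1`.
-/

theorem sum_pow_char_of_commute {A ι : Type*} [Ring A] (p : ℕ) [Fact p.Prime] [CharP A p]
    (s : Finset ι) (f : ι → A) (h : (s : Set ι).Pairwise fun i j => Commute (f i) (f j)) :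
    (∑ i ∈ s, f i) ^ p = ∑ i ∈ s, f i ^ p := by
  classical
  induction s using Finset.induction_on with
  | empty => simp [zero_pow (Fact.out : p.Prime).ne_zero]
  | insert a s ha ih =>
    rw [Finset.coe_insert, Set.pairwise_insert] at h
    rw [Finset.sum_insert ha, Finset.sum_insert ha,
      add_pow_char_of_commute _ (Commute.sum_right _ _ _ fun j hj =>
        (h.2 j hj (ne_of_mem_of_not_mem hj ha).symm).1), ih h.1]

theorem OreLocalization.commute_numeratorHom {R : Type*} [Monoid R] {S : Submonoid R} [OreSet S]
    {z : R} (hz : ∀ r : R, Commute r z) (x : R[S⁻¹]) : Commute x (numeratorHom z) := by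
  induction x using OreLocalization.ind with
  | _ r s =>
    rw [Commute, SemiconjBy, numeratorHom_apply, mul_div_one,
      oreDiv_mul_char z r 1 s z s (hz s).eq, mul_one, (hz r).eq]

theorem MvPolynomial.pderiv_comm {R σ : Type*} [CommSemiring R] (i j : σ) (f : MvPolynomial σ R) :
    pderiv i (pderiv j f) = pderiv j (pderiv i f) := by
  classical
  induction f using MvPolynomial.induction_on with
  | C => simp
  | add f g hf hg => simp [hf, hg]
  | mul_X f k hf =>
    simp only [pderiv_mul, map_add, pderiv_X, hf, Pi.single_apply]
    split_ifs <;> simp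
    ring

section WeylAlgebra

variable (R : Type*) [CommRing R] (n : ℕ)

theorem wX_commute (i j : Fin n) : Commute (wX R n i) (wX R n j) := by
  simpa only [_root_.map_mul, wX, Commute, SemiconjBy] using
    RingQuot.mkAlgHom_rel R (WeylRel.xx (R := R) i j)

theorem wY_mul_wX (i j : Fin n) :
    wY R n i * wX R n j = wX R n j * wY R n i + if i = j then 1 else 0 := by
  have h := RingQuot.mkAlgHom_rel R (WeylRel.yx (R := R) i j)
  simp only [_root_.map_mul, _root_.map_add, apply_ite (RingQuot.mkAlgHom R (WeylRel R n)),
    _root_.map_one, map_zero] at h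
  simpa only [wX, wY] using h

theorem wY_mul_wX_pow (i j : Fin n) (m : ℕ) :
    wY R n i * wX R n j ^ (m + 1) =
      wX R n j ^ (m + 1) * wY R n i + (m + 1 : ℕ) * if i = j then wX R n j ^ m else 0 := by
  induction m with
  | zero => simpa using wY_mul_wX R n i j
  | succ m ih =>
    rw [pow_succ, ← mul_assoc, ih, add_mul, mul_assoc, wY_mul_wX, mul_add, ← mul_assoc, ← pow_succ]
    split_ifs
    · push_cast
      noncomm_ring
    · simp

theorem commute_wX_pow_char (p : ℕ) [CharP R p] (j : Fin n) (a : WeylAlgebra R n) :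
    Commute a (wX R n j ^ p) := by
  obtain ⟨b, rfl⟩ := RingQuot.mkAlgHom_surjective R (WeylRel R n) a
  induction b using FreeAlgebra.induction with
  | grade0 r => rw [AlgHom.commutes]; exact Algebra.commutes r _
  | grade1 x =>
    rcases x with i | i
    · exact (wX_commute R n i j).pow_right p
    · obtain _ | m := p
      · rw [pow_zero]; exact Commute.one_right _
      have h := wY_mul_wX_pow R n i j m
      rw [← map_natCast (algebraMap R (WeylAlgebra R n)), CharP.cast_eq_zero, map_zero, zero_mul,
        add_zero] at h
      exact h
  | mul a b ha hb => rw [_root_.map_mul]; exact ha.mul_left hb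
  | add a b ha hb => rw [_root_.map_add]; exact ha.add_left hb

noncomputable def weylRep : WeylAlgebra R n →ₐ[R] Module.End R (MvPolynomial (Fin n) R) :=
  RingQuot.liftAlgHom R ⟨FreeAlgebra.lift R
    (Sum.elim (fun i => LinearMap.mulLeft R (MvPolynomial.X i))
      (fun i => (MvPolynomial.pderiv i).toLinearMap)), by
    rintro a b (⟨i, j⟩ | ⟨i, j⟩ | ⟨i, j⟩) <;>
      simp only [_root_.map_mul, _root_.map_add, FreeAlgebra.lift_ι_apply, Sum.elim_inl,
        Sum.elim_inr] <;>
      refine LinearMap.ext fun f => ?_ <;>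
      simp only [Module.End.mul_apply, LinearMap.mulLeft_apply, Derivation.coeFn_coe,
        LinearMap.add_apply]
    · ring
    · exact MvPolynomial.pderiv_comm i j f
    · classical
      rw [MvPolynomial.pderiv_mul]
      by_cases h : i = j <;> simp [h, MvPolynomial.pderiv_X, add_comm]⟩

theorem weylRep_wX (i : Fin n) :
    weylRep R n (wX R n i) = LinearMap.mulLeft R (MvPolynomial.X i) := by
  rw [wX, weylRep, RingQuot.liftAlgHom_mkAlgHom_apply, FreeAlgebra.lift_ι_apply]; rfl

theorem linearIndependent_wX_pow {m : ℕ} (hm : m ≠ 0) :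
    LinearIndependent R fun i : Fin n => wX R n i ^ m := by
  let eval₁ : WeylAlgebra R n →ₗ[R] MvPolynomial (Fin n) R :=
    LinearMap.applyₗ (1 : MvPolynomial (Fin n) R) ∘ₗ (weylRep R n).toLinearMap
  refine LinearIndependent.of_comp eval₁ ?_
  have hmono : (eval₁ ∘ fun i : Fin n => wX R n i ^ m) =
      MvPolynomial.basisMonomials (Fin n) R ∘ fun i => Finsupp.single i m := by
    ext1 i
    simp [eval₁, weylRep_wX, LinearMap.pow_mulLeft, MvPolynomial.X_pow_eq_monomial]
  rw [hmono]
  exact (MvPolynomial.basisMonomials (Fin n) R).linearIndependent.comp _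
    (Finsupp.single_left_injective hm)

end WeylAlgebra

section WeylFrac

variable (F : Type*) [Field F] (n : ℕ) [OreLocalization.OreSet (WeylAlgebra F n)⁰]

theorem weylToFrac_injective : Function.Injective (weylToFrac F n) :=
  OreLocalization.numeratorHom_inj inf_le_left

theorem weylToFrac_smul (c : F) (a : WeylAlgebra F n) :
    weylToFrac F n (c • a) = c • weylToFrac F n a :=
  (OreLocalization.smul_oreDiv_one c a).symm

theorem commute_weylToFrac_wX_pow_char (p : ℕ) [CharP F p] (j : Fin n) (u : WeylFrac F n) :
    Commute u (weylToFrac F n (wX F n j ^ p)) :=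
  OreLocalization.commute_numeratorHom (commute_wX_pow_char F n p j) u

theorem map_weylToFrac_wX_pow_char [Nontrivial (WeylAlgebra F n)]
    [NoZeroDivisors (WeylAlgebra F n)] (p : ℕ) [Fact p.Prime] [CharP F p]
    (σ : WeylFrac F n →ₐ[F] WeylFrac F n) (M : Matrix (Fin n) (Fin n) F)
    (hσ : ∀ j, σ (weylToFrac F n (wX F n j)) = ∑ i, M i j • weylToFrac F n (wX F n i))
    (j : Fin n) :
    σ (weylToFrac F n (wX F n j ^ p)) = weylToFrac F n (∑ i, M i j ^ p • wX F n i ^ p) := by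
  have : CharP (WeylFrac F n) p := charP_of_injective_algebraMap' F p
  rw [map_pow, map_pow, hσ, sum_pow_char_of_commute p Finset.univ
    (fun i => M i j • weylToFrac F n (wX F n i)) fun i _ k _ _ =>
    (((wX_commute F n i k).map (weylToFrac F n)).smul_right _).smul_left _, map_sum]
  simp only [smul_pow, ← map_pow, weylToFrac_smul]

end WeylFrac

theorem weylFrac_automorphism_outer_general
    (p n : ℕ) (F : Type*) [Field F] [CharP F p] (hp : 0 < p)
    [OreLocalization.OreSet (WeylAlgebra F n)⁰]
    [Nontrivial (WeylAlgebra F n)] [NoZeroDivisors (WeylAlgebra F n)]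
    (g : GL (Fin n) F) (hg : g ≠ 1)
    (σ : WeylFrac F n ≃ₐ[F] WeylFrac F n)
    (hσx : ∀ j, σ (weylToFrac F n (wX F n j)) =
      ∑ i, (g : Matrix (Fin n) (Fin n) F) i j • weylToFrac F n (wX F n i)) :
    ¬ ∃ q : WeylFrac F n, q ≠ 0 ∧ ∀ a : WeylFrac F n, σ a = q * a * q⁻¹ := by
  rintro ⟨q, hq, hconj⟩
  have : Fact p.Prime := ⟨(CharP.char_is_prime_or_zero F p).resolve_right hp.ne'⟩
  refine hg (Units.ext (Matrix.ext fun i j => frobenius_inj F p ?_))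
  have hfix : σ (weylToFrac F n (wX F n j ^ p)) = weylToFrac F n (wX F n j ^ p) := by
    rw [hconj, (commute_weylToFrac_wX_pow_char F n p j q).eq, mul_inv_cancel_right₀ hq]
  have hsum : ∑ k, (g : Matrix (Fin n) (Fin n) F) k j ^ p • wX F n k ^ p
      = ∑ k, (Pi.single j 1 : Fin n → F) k • wX F n k ^ p := by
    simpa [Pi.single_apply] using weylToFrac_injective F n <|
      (map_weylToFrac_wX_pow_char F n p σ.toAlgHom _ hσx j).symm.trans hfix
  have hcoeff := Fintype.linearIndependent_iffₛ.mp
    (linearIndependent_wX_pow F n hp.ne') _ _ hsum i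
  simp only [frobenius_def, hcoeff, Units.val_one, Matrix.one_apply, Pi.single_apply]
  split_ifs <;> simp [hp.ne']

/-- Every nontrivial element `g ∈ GLₙ(F)` (`F` algebraically closed of characteristic `p > 0`)
acts on `Frac(A_n(F))`, via the symplectic extension of its linear action on the Weyl algebra,
by an *outer* automorphism: there is no nonzero `q ∈ Frac(A_n(F))` with
`g · a = q a q⁻¹` for all `a`. -/
theorem weylFrac_automorphism_outer
    (p n : ℕ) (hn : 1 ≤ n) (F : Type*) [Field F] [IsAlgClosed F] [CharP F p] (hp : 0 < p)
    [OreLocalization.OreSet (WeylAlgebra F n)⁰]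
    [Nontrivial (WeylAlgebra F n)] [NoZeroDivisors (WeylAlgebra F n)]
    (g : GL (Fin n) F) (hg : g ≠ 1)
    (σ : WeylFrac F n ≃ₐ[F] WeylFrac F n)
    (hσx : ∀ j, σ (weylToFrac F n (wX F n j)) =
      ∑ i, (g : Matrix (Fin n) (Fin n) F) i j • weylToFrac F n (wX F n i))
    (hσy : ∀ j, σ (weylToFrac F n (wY F n j)) =
      ∑ i, ((g⁻¹ : GL (Fin n) F) : Matrix (Fin n) (Fin n) F) j i • weylToFrac F n (wY F n i)) :
    ¬ ∃ q : WeylFrac F n, q ≠ 0 ∧ ∀ a : WeylFrac F n, σ a = q * a * q⁻¹ :=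
  weylFrac_automorphism_outer_general p n F hp g hg σ hσx
end

section
/- Let F be a field of characteristic p > 0 and n ≥ 1. Then the center of the Weyl algebra A_n(F) equals the F-subalgebra generated by x_1^p,…,x_n^p, y_1^p,…,y_n^p: Z(A_n(F)) = F[x_1^p,…,x_n^p, y_1^p,…,y_n^p]. -/
set_option synthInstance.maxHeartbeats 1000000
set_option maxHeartbeats 4000000

open scoped nonZeroDivisors
open Matrix

section ListLemmas
variable {A : Type*} [Ring A]

private theorem update_succ_comp {m : ℕ} (f : Fin (m+1) → A) (j : Fin m) (v : A) :
    (fun k : Fin m => Function.update f j.succ v k.succ)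
      = Function.update (fun k : Fin m => f k.succ) j v := by
  funext k
  simp [Function.update_apply, Fin.succ_inj]

private theorem update_zero_comp {m : ℕ} (f : Fin (m+1) → A) (v : A) :
    (fun k : Fin m => Function.update f 0 v k.succ) = fun k : Fin m => f k.succ := by
  funext k
  simp [Function.update_of_ne (Fin.succ_ne_zero k)]

theorem ofFn_update_smul_prod : ∀ {n : ℕ} (f : Fin n → A) (i : Fin n) (c : ℕ) (g : A),
    (List.ofFn (Function.update f i (c • g))).prod
      = c • (List.ofFn (Function.update f i g)).prod := by
  intro n
  induction n with
  | zero => exact fun _ i => i.elim0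
  | succ m ih =>
    intro f i c g
    induction i using Fin.cases with
    | zero =>
      rw [List.ofFn_succ, List.ofFn_succ, update_zero_comp, update_zero_comp,
        Function.update_self, Function.update_self, List.prod_cons, List.prod_cons,
        smul_mul_assoc]
    | succ j =>
      rw [List.ofFn_succ, List.ofFn_succ, update_succ_comp, update_succ_comp,
        Function.update_of_ne (Fin.succ_ne_zero j).symm,
        Function.update_of_ne (Fin.succ_ne_zero j).symm,
        List.prod_cons, List.prod_cons, ih, mul_smul_comm]

theorem ofFn_update_mul_prod : ∀ {n : ℕ} (f : Fin n → A) (i : Fin n) (c : A) (g : A),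
    (∀ j, j ≠ i → Commute c (f j)) →
    (List.ofFn (Function.update f i (c * g))).prod
      = c * (List.ofFn (Function.update f i g)).prod := by
  intro n
  induction n with
  | zero => exact fun _ i => i.elim0
  | succ m ih =>
    intro f i c g hc
    induction i using Fin.cases with
    | zero =>
      rw [List.ofFn_succ, List.ofFn_succ, update_zero_comp, update_zero_comp,
        Function.update_self, Function.update_self, List.prod_cons, List.prod_cons,
        mul_assoc]
    | succ j =>
      rw [List.ofFn_succ, List.ofFn_succ, update_succ_comp, update_succ_comp,
        Function.update_of_ne (Fin.succ_ne_zero j).symm,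
        Function.update_of_ne (Fin.succ_ne_zero j).symm,
        List.prod_cons, List.prod_cons,
        ih _ _ _ _ (fun k hk => hc k.succ (by simpa using hk)),
        ← mul_assoc, ← (hc 0 (Fin.succ_ne_zero j).symm).eq, mul_assoc]

/-- Key commutator-through-product lemma. -/
theorem mul_ofFn_prod : ∀ {n : ℕ} (f : Fin n → A) (i : Fin n) (y d : A),
    (∀ j, j ≠ i → Commute y (f j)) →
    y * f i = f i * y + d →
    y * (List.ofFn f).prod
      = (List.ofFn f).prod * y + (List.ofFn (Function.update f i d)).prod := by
  intro n
  induction n with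
  | zero => exact fun _ i => i.elim0
  | succ m ih =>
    intro f i y d hc hi
    induction i using Fin.cases with
    | zero =>
      rw [List.ofFn_succ, List.ofFn_succ, update_zero_comp, Function.update_self,
        List.prod_cons, List.prod_cons]
      have hcom : Commute y (List.ofFn fun k : Fin m => f k.succ).prod :=
        Commute.list_prod_right _ _ (by
          intro x hx
          rw [List.mem_ofFn] at hx
          obtain ⟨k, rfl⟩ := hx
          exact hc _ (Fin.succ_ne_zero k))
      rw [← mul_assoc, hi, add_mul, mul_assoc, hcom.eq, ← mul_assoc]
    | succ j =>
      have h0 : Commute y (f 0) := hc 0 (Fin.succ_ne_zero j).symm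
      rw [List.ofFn_succ, List.ofFn_succ, update_succ_comp,
        Function.update_of_ne (Fin.succ_ne_zero j).symm,
        List.prod_cons, List.prod_cons, ← mul_assoc, h0.eq, mul_assoc,
        ih _ j _ _ (fun k hk => hc k.succ (by simpa using hk)) hi,
        mul_add, ← mul_assoc]

end ListLemmas

section PowLemmas
variable {A : Type*} [Ring A]

theorem comm_pow_of_comm_one {A : Type*} [Ring A] {x y : A} (h : y * x = x * y + 1) (k : ℕ) :
    y * x ^ k = x ^ k * y + k • x ^ (k - 1) := by
  induction k with
  | zero => simp
  | succ m ihm =>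
    have hx : x * (m • x ^ (m - 1)) = m • x ^ m := by
      cases m with
      | zero => simp
      | succ l =>
        rw [mul_smul_comm]
        congr 1
        rw [Nat.succ_sub_one, ← pow_succ']
    calc y * x ^ (m + 1) = y * x * x ^ m := by rw [pow_succ', ← mul_assoc]
      _ = (x * y + 1) * x ^ m := by rw [h]
      _ = x * (y * x ^ m) + x ^ m := by rw [add_mul, one_mul, mul_assoc]
      _ = x * (x ^ m * y + m • x ^ (m - 1)) + x ^ m := by rw [ihm]
      _ = x ^ (m + 1) * y + (x * (m • x ^ (m - 1)) + x ^ m) := by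
          rw [mul_add, ← mul_assoc, ← pow_succ', add_assoc]
      _ = x ^ (m + 1) * y + (m + 1) • x ^ m := by rw [hx, succ_nsmul]

theorem pow_comm_of_comm_one {A : Type*} [Ring A] {x y : A} (h : y * x = x * y + 1) (k : ℕ) :
    y ^ k * x = x * y ^ k + k • y ^ (k - 1) := by
  have h' : MulOpposite.op x * MulOpposite.op y
      = MulOpposite.op y * MulOpposite.op x + 1 := by
    rw [← MulOpposite.op_mul, ← MulOpposite.op_mul, ← MulOpposite.op_one,
      ← MulOpposite.op_add, h]
  have hk := comm_pow_of_comm_one h' k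
  apply_fun MulOpposite.unop at hk
  have hc : (k : A) * y ^ (k - 1) = y ^ (k - 1) * (k : A) := (Nat.cast_commute k _).eq
  simpa [nsmul_eq_mul, ← hc] using hk

end PowLemmas

section WeylBasic
variable {F : Type*} [Field F] {n : ℕ}

theorem wX_comm (i j : Fin n) : Commute (wX F n i) (wX F n j) := by
  have := RingQuot.mkAlgHom_rel F (WeylRel.xx (R := F) (n := n) i j)
  simpa [wX, Commute, SemiconjBy, _root_.map_mul] using this

theorem wY_comm (i j : Fin n) : Commute (wY F n i) (wY F n j) := by
  have := RingQuot.mkAlgHom_rel F (WeylRel.yy (R := F) (n := n) i j)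
  simpa [wY, Commute, SemiconjBy, _root_.map_mul] using this

theorem wYX (i j : Fin n) :
    wY F n i * wX F n j = wX F n j * wY F n i + if i = j then 1 else 0 := by
  have := RingQuot.mkAlgHom_rel F (WeylRel.yx (R := F) (n := n) i j)
  simpa [wX, wY, _root_.map_mul, _root_.map_add, apply_ite] using this

theorem wYX_self (i : Fin n) :
    wY F n i * wX F n i = wX F n i * wY F n i + 1 := by simpa using wYX i i

theorem wYX_of_ne {i j : Fin n} (h : i ≠ j) : Commute (wY F n i) (wX F n j) := by
  have := wYX (F := F) (n := n) i j
  rw [if_neg h, add_zero] at this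
  exact this

end WeylBasic

section Mirror
variable {A : Type*} [Ring A]

theorem ofFn_prod_mul : ∀ {n : ℕ} (f : Fin n → A) (i : Fin n) (y d : A),
    (∀ j, j ≠ i → Commute y (f j)) →
    f i * y = y * f i + d →
    (List.ofFn f).prod * y
      = y * (List.ofFn f).prod + (List.ofFn (Function.update f i d)).prod := by
  intro n
  induction n with
  | zero => exact fun _ i => i.elim0
  | succ m ih =>
    intro f i y d hc hi
    induction i using Fin.cases with
    | zero =>
      rw [List.ofFn_succ, List.ofFn_succ, update_zero_comp, Function.update_self,
        List.prod_cons, List.prod_cons]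
      have hcom : Commute y (List.ofFn fun k : Fin m => f k.succ).prod :=
        Commute.list_prod_right _ _ (by
          intro x hx
          rw [List.mem_ofFn] at hx
          obtain ⟨k, rfl⟩ := hx
          exact hc _ (Fin.succ_ne_zero k))
      rw [mul_assoc, ← hcom.eq, ← mul_assoc, hi, add_mul, mul_assoc]
    | succ j =>
      have h0 : Commute y (f 0) := hc 0 (Fin.succ_ne_zero j).symm
      rw [List.ofFn_succ, List.ofFn_succ, update_succ_comp,
        Function.update_of_ne (Fin.succ_ne_zero j).symm,
        List.prod_cons, List.prod_cons, mul_assoc,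
        ih _ j _ _ (fun k hk => hc k.succ (by simpa using hk)) hi,
        mul_add, ← mul_assoc, ← h0.eq, mul_assoc]

theorem update_pow {n : ℕ} {A : Type*} [Monoid A] (g : Fin n → A) (a : Fin n → ℕ)
    (i : Fin n) (m : ℕ) :
    (fun j => g j ^ Function.update a i m j)
      = Function.update (fun j => g j ^ a j) i (g i ^ m) := by
  funext j
  rcases eq_or_ne j i with rfl | hj
  · simp
  · simp [Function.update_of_ne hj]

end Mirror

section WeylMonomials
variable {F : Type*} [Field F] {n : ℕ}

noncomputable def XP (F : Type*) [Field F] (n : ℕ) (a : Fin n → ℕ) : WeylAlgebra F n :=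
  (List.ofFn fun i => wX F n i ^ a i).prod

noncomputable def YP (F : Type*) [Field F] (n : ℕ) (b : Fin n → ℕ) : WeylAlgebra F n :=
  (List.ofFn fun i => wY F n i ^ b i).prod

theorem XP_zero : XP F n (fun _ => 0) = 1 := by
  apply List.prod_eq_one
  intro x hx
  rw [List.mem_ofFn] at hx
  obtain ⟨k, rfl⟩ := hx
  exact pow_zero _

theorem YP_zero : YP F n (fun _ => 0) = 1 := by
  apply List.prod_eq_one
  intro x hx
  rw [List.mem_ofFn] at hx
  obtain ⟨k, rfl⟩ := hx
  exact pow_zero _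

theorem wX_commute_XP (i : Fin n) (a : Fin n → ℕ) : Commute (wX F n i) (XP F n a) :=
  Commute.list_prod_right _ _ (by
    intro x hx
    rw [List.mem_ofFn] at hx
    obtain ⟨k, rfl⟩ := hx
    exact (wX_comm i k).pow_right _)

theorem wY_commute_YP (i : Fin n) (b : Fin n → ℕ) : Commute (wY F n i) (YP F n b) :=
  Commute.list_prod_right _ _ (by
    intro x hx
    rw [List.mem_ofFn] at hx
    obtain ⟨k, rfl⟩ := hx
    exact (wY_comm i k).pow_right _)

theorem wX_mul_XP (i : Fin n) (a : Fin n → ℕ) :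
    XP F n (Function.update a i (a i + 1)) = wX F n i * XP F n a := by
  unfold XP
  rw [update_pow, pow_succ',
    ofFn_update_mul_prod _ _ _ _ (fun j _ => (wX_comm i j).pow_right _),
    Function.update_eq_self]

theorem wY_mul_YP (i : Fin n) (b : Fin n → ℕ) :
    YP F n (Function.update b i (b i + 1)) = wY F n i * YP F n b := by
  unfold YP
  rw [update_pow, pow_succ',
    ofFn_update_mul_prod _ _ _ _ (fun j _ => (wY_comm i j).pow_right _),
    Function.update_eq_self]

theorem wY_mul_XP (i : Fin n) (a : Fin n → ℕ) :
    wY F n i * XP F n a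
      = XP F n a * wY F n i + a i • XP F n (Function.update a i (a i - 1)) := by
  have h := mul_ofFn_prod (fun j => wX F n j ^ a j) i (wY F n i)
    (a i • wX F n i ^ (a i - 1))
    (fun j hj => Commute.pow_right (wYX_of_ne (Ne.symm hj)) _)
    (comm_pow_of_comm_one (wYX_self i) (a i))
  unfold XP
  rw [h, ofFn_update_smul_prod, update_pow]

theorem YP_mul_wX (i : Fin n) (b : Fin n → ℕ) :
    YP F n b * wX F n i
      = wX F n i * YP F n b + b i • YP F n (Function.update b i (b i - 1)) := by
  have h := ofFn_prod_mul (fun j => wY F n j ^ b j) i (wX F n i)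
    (b i • wY F n i ^ (b i - 1))
    (fun j hj => Commute.pow_right ((wYX_of_ne hj).symm) _)
    (pow_comm_of_comm_one (wYX_self i) (b i))
  unfold YP
  rw [h, ofFn_update_smul_prod, update_pow]

/-- The PBW monomial `x^a y^b`. -/
noncomputable def Mn (F : Type*) [Field F] (n : ℕ) (a b : Fin n → ℕ) : WeylAlgebra F n :=
  XP F n a * YP F n b

/-- The span of the PBW monomials. -/
noncomputable def SM (F : Type*) [Field F] (n : ℕ) : Submodule F (WeylAlgebra F n) :=
  Submodule.span F (Set.range fun ab : (Fin n → ℕ) × (Fin n → ℕ) => Mn F n ab.1 ab.2)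

theorem Mn_mem (a b : Fin n → ℕ) : Mn F n a b ∈ SM F n :=
  Submodule.subset_span ⟨(a, b), rfl⟩

theorem Mn_zero : Mn F n (fun _ => 0) (fun _ => 0) = 1 := by
  rw [Mn, XP_zero, YP_zero, one_mul]

theorem one_mem_SM : (1 : WeylAlgebra F n) ∈ SM F n := by
  rw [← Mn_zero]
  exact Mn_mem _ _

theorem nsmul_mem_SM {z : WeylAlgebra F n} (k : ℕ) (hz : z ∈ SM F n) :
    k • z ∈ SM F n := by
  rw [← Nat.cast_smul_eq_nsmul F]
  exact Submodule.smul_mem _ _ hz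

theorem wX_mul_Mn (i : Fin n) (a b : Fin n → ℕ) :
    wX F n i * Mn F n a b = Mn F n (Function.update a i (a i + 1)) b := by
  rw [Mn, Mn, ← mul_assoc, ← wX_mul_XP]

theorem wY_mul_Mn (i : Fin n) (a b : Fin n → ℕ) :
    wY F n i * Mn F n a b
      = Mn F n a (Function.update b i (b i + 1))
        + a i • Mn F n (Function.update a i (a i - 1)) b := by
  rw [Mn, ← mul_assoc, wY_mul_XP, add_mul, mul_assoc, ← wY_mul_YP, smul_mul_assoc,
    Mn, Mn]

theorem mul_left_stable {u : WeylAlgebra F n}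
    (hu : ∀ a b, u * Mn F n a b ∈ SM F n) :
    ∀ z ∈ SM F n, u * z ∈ SM F n := by
  intro z hz
  have hle : (SM F n).map (LinearMap.mulLeft F u) ≤ SM F n := by
    rw [SM, Submodule.map_span, Submodule.span_le]
    rintro _ ⟨_, ⟨⟨a, b⟩, rfl⟩, rfl⟩
    exact hu a b
  exact hle ⟨z, hz, rfl⟩

theorem mul_right_stable {u : WeylAlgebra F n}
    (hu : ∀ a b, Mn F n a b * u ∈ SM F n) :
    ∀ z ∈ SM F n, z * u ∈ SM F n := by
  intro z hz
  have hle : (SM F n).map (LinearMap.mulRight F u) ≤ SM F n := by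
    rw [SM, Submodule.map_span, Submodule.span_le]
    rintro _ ⟨_, ⟨⟨a, b⟩, rfl⟩, rfl⟩
    exact hu a b
  exact hle ⟨z, hz, rfl⟩

theorem wX_mul_mem (i : Fin n) {z : WeylAlgebra F n} (hz : z ∈ SM F n) :
    wX F n i * z ∈ SM F n :=
  mul_left_stable (fun a b => by rw [wX_mul_Mn]; exact Mn_mem _ _) z hz

theorem wY_mul_mem (i : Fin n) {z : WeylAlgebra F n} (hz : z ∈ SM F n) :
    wY F n i * z ∈ SM F n :=
  mul_left_stable (fun a b => by
    rw [wY_mul_Mn]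
    exact Submodule.add_mem _ (Mn_mem _ _) (nsmul_mem_SM _ (Mn_mem _ _))) z hz

theorem XP_decomp {a : Fin n → ℕ} {i : Fin n} (hi : a i ≠ 0) :
    XP F n a = wX F n i * XP F n (Function.update a i (a i - 1)) := by
  rw [← wX_mul_XP]
  congr 1
  funext j
  rcases eq_or_ne j i with rfl | hj
  · simp [Nat.sub_add_cancel (Nat.one_le_iff_ne_zero.mpr hi)]
  · simp [Function.update_of_ne hj]

theorem YP_decomp {b : Fin n → ℕ} {i : Fin n} (hi : b i ≠ 0) :
    YP F n b = wY F n i * YP F n (Function.update b i (b i - 1)) := by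
  rw [← wY_mul_YP]
  congr 1
  funext j
  rcases eq_or_ne j i with rfl | hj
  · simp [Nat.sub_add_cancel (Nat.one_le_iff_ne_zero.mpr hi)]
  · simp [Function.update_of_ne hj]

theorem sum_update_lt {a : Fin n → ℕ} {i : Fin n} (hi : a i ≠ 0) {N : ℕ}
    (ha : ∑ j, a j ≤ N + 1) : ∑ j, Function.update a i (a i - 1) j ≤ N := by
  have h1 : ∑ j, Function.update a i (a i - 1) j
      = (a i - 1) + ∑ j ∈ Finset.univ \ {i}, a j :=
    Finset.sum_update_of_mem (Finset.mem_univ i) _ _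
  have h2 : ∑ j, a j = a i + ∑ j ∈ Finset.univ \ {i}, a j :=
    Finset.sum_eq_add_sum_sdiff_singleton_of_mem (Finset.mem_univ i) _
  omega

theorem XP_mul_mem (a : Fin n → ℕ) {z : WeylAlgebra F n} (hz : z ∈ SM F n) :
    XP F n a * z ∈ SM F n := by
  suffices h : ∀ (N : ℕ) (a : Fin n → ℕ), (∑ j, a j) ≤ N →
      ∀ z ∈ SM F n, XP F n a * z ∈ SM F n from h (∑ j, a j) a le_rfl z hz
  intro N
  induction N with
  | zero =>
    intro a ha z hz
    have haz : a = fun _ => 0 := by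
      funext j
      exact Finset.sum_eq_zero_iff.mp (Nat.le_zero.mp ha) j (Finset.mem_univ j)
    rw [haz, XP_zero, one_mul]
    exact hz
  | succ N ihN =>
    intro a ha z hz
    by_cases h0 : ∀ j, a j = 0
    · have haz : a = fun _ => 0 := funext h0
      rw [haz, XP_zero, one_mul]
      exact hz
    · push_neg at h0
      obtain ⟨i, hi⟩ := h0
      rw [XP_decomp hi, mul_assoc]
      exact wX_mul_mem i (ihN _ (sum_update_lt hi ha) z hz)

theorem YP_mul_mem (b : Fin n → ℕ) {z : WeylAlgebra F n} (hz : z ∈ SM F n) :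
    YP F n b * z ∈ SM F n := by
  suffices h : ∀ (N : ℕ) (b : Fin n → ℕ), (∑ j, b j) ≤ N →
      ∀ z ∈ SM F n, YP F n b * z ∈ SM F n from h (∑ j, b j) b le_rfl z hz
  intro N
  induction N with
  | zero =>
    intro b hb z hz
    have hbz : b = fun _ => 0 := by
      funext j
      exact Finset.sum_eq_zero_iff.mp (Nat.le_zero.mp hb) j (Finset.mem_univ j)
    rw [hbz, YP_zero, one_mul]
    exact hz
  | succ N ihN =>
    intro b hb z hz
    by_cases h0 : ∀ j, b j = 0
    · have hbz : b = fun _ => 0 := funext h0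
      rw [hbz, YP_zero, one_mul]
      exact hz
    · push_neg at h0
      obtain ⟨i, hi⟩ := h0
      rw [YP_decomp hi, mul_assoc]
      exact wY_mul_mem i (ihN _ (sum_update_lt hi hb) z hz)

theorem mul_mem_SM {z w : WeylAlgebra F n} (hz : z ∈ SM F n) (hw : w ∈ SM F n) :
    z * w ∈ SM F n :=
  mul_right_stable (fun a b => by
    rw [Mn, mul_assoc]
    exact XP_mul_mem a (YP_mul_mem b hw)) z hz

theorem wX_mem_SM (i : Fin n) : wX F n i ∈ SM F n := by
  have := wX_mul_mem i (one_mem_SM (F := F) (n := n))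
  rwa [mul_one] at this

theorem wY_mem_SM (i : Fin n) : wY F n i ∈ SM F n := by
  have := wY_mul_mem i (one_mem_SM (F := F) (n := n))
  rwa [mul_one] at this

theorem mem_SM (z : WeylAlgebra F n) : z ∈ SM F n := by
  obtain ⟨w, rfl⟩ := RingQuot.mkAlgHom_surjective F (WeylRel F n) z
  induction w using FreeAlgebra.induction with
  | grade0 r =>
    rw [AlgHom.commutes, Algebra.algebraMap_eq_smul_one]
    exact Submodule.smul_mem _ _ one_mem_SM
  | grade1 x =>
    cases x with
    | inl i => exact wX_mem_SM i
    | inr i => exact wY_mem_SM i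
  | mul a b ha hb =>
    rw [_root_.map_mul]
    exact mul_mem_SM ha hb
  | add a b ha hb =>
    rw [_root_.map_add]
    exact Submodule.add_mem _ ha hb

theorem mem_center_of_commute {u : WeylAlgebra F n}
    (hX : ∀ i, Commute u (wX F n i)) (hY : ∀ i, Commute u (wY F n i)) :
    u ∈ Subalgebra.center F (WeylAlgebra F n) := by
  rw [Subalgebra.mem_center_iff]
  intro z
  obtain ⟨w, rfl⟩ := RingQuot.mkAlgHom_surjective F (WeylRel F n) z
  induction w using FreeAlgebra.induction with
  | grade0 r =>
    rw [AlgHom.commutes]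
    exact Algebra.commutes r u
  | grade1 x =>
    cases x with
    | inl i => exact (hX i).symm.eq
    | inr i => exact (hY i).symm.eq
  | mul a b ha hb =>
    rw [_root_.map_mul, mul_assoc, hb, ← mul_assoc, ha, mul_assoc]
  | add a b ha hb =>
    rw [_root_.map_add, add_mul, mul_add, ha, hb]

end WeylMonomials

section Model
open MvPolynomial

theorem pderiv_pderiv_comm {σ : Type*} {R : Type*} [CommRing R] (i j : σ)
    (p : MvPolynomial σ R) :
    MvPolynomial.pderiv i (MvPolynomial.pderiv j p)
      = MvPolynomial.pderiv j (MvPolynomial.pderiv i p) := by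
  induction p using MvPolynomial.induction_on with
  | C a => simp
  | add p q hp hq => simp [hp, hq]
  | mul_X p k hp =>
    have hk : ∀ u v : σ, pderiv u (pderiv v (X k : MvPolynomial σ R)) = 0 := by
      intro u v
      rcases eq_or_ne k v with rfl | hkv
      · simp
      · rw [pderiv_X_of_ne hkv]
        simp
    simp only [pderiv_mul, map_add, hp, hk, mul_zero, add_zero, zero_add]
    ring

variable {F : Type*} [Field F] {n : ℕ}

/-- The generators of the faithful polynomial model. -/
noncomputable def genOp (F : Type*) [Field F] (n : ℕ) :
    Fin n ⊕ Fin n → Module.End F (MvPolynomial (Fin n ⊕ Fin n) F)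
  | Sum.inl i => LinearMap.mulLeft F (X (Sum.inl i))
  | Sum.inr i => (pderiv (Sum.inl i)).toLinearMap + LinearMap.mulLeft F (X (Sum.inr i))

theorem genOp_rel : ∀ ⦃x y⦄, WeylRel F n x y →
    (FreeAlgebra.lift F (genOp F n)) x = (FreeAlgebra.lift F (genOp F n)) y := by
  intro x y h
  induction h with
  | xx i j =>
    rw [_root_.map_mul, _root_.map_mul, FreeAlgebra.lift_ι_apply, FreeAlgebra.lift_ι_apply]
    apply LinearMap.ext
    intro q
    simp only [genOp, Module.End.mul_apply, LinearMap.mulLeft_apply]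
    ring
  | yy i j =>
    rw [_root_.map_mul, _root_.map_mul, FreeAlgebra.lift_ι_apply, FreeAlgebra.lift_ι_apply]
    apply LinearMap.ext
    intro q
    simp only [genOp, Module.End.mul_apply, LinearMap.add_apply, LinearMap.mulLeft_apply,
      Derivation.coeFn_coe, map_add, pderiv_mul]
    rw [pderiv_X_of_ne (by simp), pderiv_X_of_ne (by simp),
      pderiv_pderiv_comm (Sum.inl i) (Sum.inl j)]
    ring
  | yx i j =>
    rw [_root_.map_mul, map_add, _root_.map_mul,
      apply_ite (FreeAlgebra.lift F (genOp F n)), _root_.map_one, _root_.map_zero,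
      FreeAlgebra.lift_ι_apply, FreeAlgebra.lift_ι_apply]
    apply LinearMap.ext
    intro q
    rcases eq_or_ne i j with rfl | hij
    · simp only [genOp, if_pos rfl, Module.End.mul_apply, LinearMap.add_apply,
        LinearMap.mulLeft_apply, Derivation.coeFn_coe, pderiv_mul, pderiv_X_self,
        eq_self_iff_true, if_true, Module.End.one_apply]
      ring
    · simp only [genOp, if_neg hij, Module.End.mul_apply, LinearMap.add_apply,
        LinearMap.add_apply, LinearMap.mulLeft_apply, Derivation.coeFn_coe, pderiv_mul,
        LinearMap.zero_apply, add_zero]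
      rw [pderiv_X_of_ne (by simp [Ne.symm hij])]
      ring

/-- The faithful polynomial representation of the Weyl algebra. -/
noncomputable def Wrep (F : Type*) [Field F] (n : ℕ) :
    WeylAlgebra F n →ₐ[F] Module.End F (MvPolynomial (Fin n ⊕ Fin n) F) :=
  RingQuot.liftAlgHom F ⟨FreeAlgebra.lift F (genOp F n), genOp_rel⟩

theorem Wrep_wX (i : Fin n) :
    Wrep F n (wX F n i) = LinearMap.mulLeft F (X (Sum.inl i)) := by
  rw [Wrep, wX, RingQuot.liftAlgHom_mkAlgHom_apply, FreeAlgebra.lift_ι_apply]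
  rfl

theorem Wrep_wY (i : Fin n) :
    Wrep F n (wY F n i)
      = (pderiv (Sum.inl i)).toLinearMap + LinearMap.mulLeft F (X (Sum.inr i)) := by
  rw [Wrep, wY, RingQuot.liftAlgHom_mkAlgHom_apply, FreeAlgebra.lift_ι_apply]
  rfl

/-- Exponent bookkeeping. -/
noncomputable def dm (a b : Fin n → ℕ) : (Fin n ⊕ Fin n) →₀ ℕ :=
  Finsupp.equivFunOnFinite.symm (Sum.elim a b)

theorem dm_apply (a b : Fin n → ℕ) (u : Fin n ⊕ Fin n) :
    dm a b u = Sum.elim a b u := rfl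

theorem dm_inj :
    Function.Injective (fun ab : (Fin n → ℕ) × (Fin n → ℕ) => dm (n := n) ab.1 ab.2) := by
  rintro ⟨a, b⟩ ⟨a', b'⟩ h
  have h2 : Sum.elim a b = Sum.elim a' b' := Finsupp.equivFunOnFinite.symm.injective h
  have ha : a = a' := funext fun j => congrFun h2 (Sum.inl j)
  have hb : b = b' := funext fun j => congrFun h2 (Sum.inr j)
  rw [Prod.mk.injEq]
  exact ⟨ha, hb⟩

theorem dm_zero : dm (n := n) (fun _ => 0) (fun _ => 0) = 0 := by
  ext u
  cases u <;> simp [dm_apply]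

theorem Wrep_XP_apply (a : Fin n → ℕ) (q : MvPolynomial (Fin n ⊕ Fin n) F) :
    Wrep F n (XP F n a) q = monomial (dm a (fun _ => 0)) (1 : F) * q := by
  suffices h : ∀ (N : ℕ) (a : Fin n → ℕ), (∑ j, a j) ≤ N →
      ∀ q, Wrep F n (XP F n a) q = monomial (dm a (fun _ => 0)) (1 : F) * q from
    h (∑ j, a j) a le_rfl q
  intro N
  induction N with
  | zero =>
    intro a ha q
    have haz : a = fun _ => 0 := by
      funext j
      exact Finset.sum_eq_zero_iff.mp (Nat.le_zero.mp ha) j (Finset.mem_univ j)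
    rw [haz, XP_zero, _root_.map_one, dm_zero, monomial_zero', C_1, one_mul, Module.End.one_apply]
  | succ N ihN =>
    intro a ha q
    by_cases h0 : ∀ j, a j = 0
    · have haz : a = fun _ => 0 := funext h0
      rw [haz, XP_zero, _root_.map_one, dm_zero, monomial_zero', C_1, one_mul, Module.End.one_apply]
    · push_neg at h0
      obtain ⟨i, hi⟩ := h0
      have hd : Finsupp.single (Sum.inl i) 1 + dm (Function.update a i (a i - 1)) (fun _ => 0)
          = dm a (fun _ => 0) := by
        ext u
        cases u with
        | inl j =>
          rcases eq_or_ne j i with rfl | hj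
          · simp [dm_apply, Finsupp.single_apply]
            omega
          · simp [dm_apply, Finsupp.single_apply, Ne.symm hj, Function.update_of_ne hj]
        | inr j => simp [dm_apply, Finsupp.single_apply]
      rw [XP_decomp hi, _root_.map_mul, Module.End.mul_apply,
        ihN _ (sum_update_lt hi ha) q, Wrep_wX, LinearMap.mulLeft_apply, ← mul_assoc,
        X, monomial_mul, one_mul, hd]

theorem Wrep_YP_one (b : Fin n → ℕ) :
    Wrep F n (YP F n b) 1 = monomial (dm (fun _ => 0) b) (1 : F) := by
  suffices h : ∀ (N : ℕ) (b : Fin n → ℕ), (∑ j, b j) ≤ N →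
      Wrep F n (YP F n b) 1 = monomial (dm (fun _ => 0) b) (1 : F) from
    h (∑ j, b j) b le_rfl
  intro N
  induction N with
  | zero =>
    intro b hb
    have hbz : b = fun _ => 0 := by
      funext j
      exact Finset.sum_eq_zero_iff.mp (Nat.le_zero.mp hb) j (Finset.mem_univ j)
    rw [hbz, YP_zero, _root_.map_one (Wrep F n), dm_zero, monomial_zero', C_1,
      Module.End.one_apply]
  | succ N ihN =>
    intro b hb
    by_cases h0 : ∀ j, b j = 0
    · have hbz : b = fun _ => 0 := funext h0
      rw [hbz, YP_zero, _root_.map_one (Wrep F n), dm_zero, monomial_zero', C_1,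
        Module.End.one_apply]
    · push_neg at h0
      obtain ⟨i, hi⟩ := h0
      have hd : Finsupp.single (Sum.inr i) 1 + dm (fun _ => 0) (Function.update b i (b i - 1))
          = dm (fun _ => 0) b := by
        ext u
        cases u with
        | inr j =>
          rcases eq_or_ne j i with rfl | hj
          · simp [dm_apply, Finsupp.single_apply]
            omega
          · simp [dm_apply, Finsupp.single_apply, Ne.symm hj, Function.update_of_ne hj]
        | inl j => simp [dm_apply, Finsupp.single_apply]
      have hpd : pderiv (Sum.inl i)
          (monomial (dm (fun _ => 0) (Function.update b i (b i - 1))) (1 : F)) = 0 := by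
        rw [pderiv_monomial]
        have : dm (n := n) (fun _ => 0) (Function.update b i (b i - 1)) (Sum.inl i) = 0 := rfl
        rw [this]
        simp
      rw [YP_decomp hi, _root_.map_mul, Module.End.mul_apply,
        ihN _ (sum_update_lt hi hb), Wrep_wY, LinearMap.add_apply,
        LinearMap.mulLeft_apply, Derivation.coeFn_coe, hpd, zero_add,
        X, monomial_mul, one_mul, hd]

theorem dm_add_split (a b : Fin n → ℕ) :
    dm a (fun _ => 0) + dm (fun _ => 0) b = dm a b := by
  ext u
  cases u <;> simp [dm_apply]

theorem Wrep_Mn_one (a b : Fin n → ℕ) :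
    Wrep F n (Mn F n a b) 1 = monomial (dm a b) (1 : F) := by
  rw [Mn, _root_.map_mul, Module.End.mul_apply, Wrep_YP_one, Wrep_XP_apply,
    monomial_mul, one_mul, dm_add_split]

theorem mon_li : LinearIndependent F
    (fun ab : (Fin n → ℕ) × (Fin n → ℕ) =>
      (monomial (dm ab.1 ab.2) (1 : F) : MvPolynomial (Fin n ⊕ Fin n) F)) := by
  have h := (MvPolynomial.basisMonomials (Fin n ⊕ Fin n) F).linearIndependent.comp
    (fun ab : (Fin n → ℕ) × (Fin n → ℕ) => dm ab.1 ab.2) dm_inj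
  rw [MvPolynomial.coe_basisMonomials] at h
  exact h

end Model

section Final
open MvPolynomial
variable {F : Type*} [Field F] {n : ℕ}

theorem Mn_mul_wY (i : Fin n) (a b : Fin n → ℕ) :
    Mn F n a b * wY F n i = Mn F n a (Function.update b i (b i + 1)) := by
  rw [Mn, Mn, mul_assoc, (wY_commute_YP i b).symm.eq, ← wY_mul_YP]

theorem Mn_mul_wX (i : Fin n) (a b : Fin n → ℕ) :
    Mn F n a b * wX F n i
      = Mn F n (Function.update a i (a i + 1)) b
        + b i • Mn F n a (Function.update b i (b i - 1)) := by
  rw [Mn, mul_assoc, YP_mul_wX, mul_add, ← mul_assoc, ← (wX_commute_XP i a).eq,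
    ← wX_mul_XP, mul_smul_comm, Mn, Mn]

theorem update_update_cancel {a : Fin n → ℕ} {i : Fin n} (h : a i ≠ 0) :
    Function.update (Function.update a i (a i - 1)) i
      (Function.update a i (a i - 1) i + 1) = a := by
  funext j
  rcases eq_or_ne j i with rfl | hj
  · simp
    omega
  · simp [Function.update_of_ne hj]

theorem Ei_Mn (i : Fin n) (a b : Fin n → ℕ) :
    wX F n i * (wY F n i * Mn F n a b - Mn F n a b * wY F n i)
      = (a i : F) • Mn F n a b := by
  rw [wY_mul_Mn, Mn_mul_wY, add_sub_cancel_left, mul_smul_comm, wX_mul_Mn]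
  rcases eq_or_ne (a i) 0 with h | h
  · rw [h]
    simp
  · rw [update_update_cancel h, ← Nat.cast_smul_eq_nsmul F]

theorem Gi_Mn (i : Fin n) (a b : Fin n → ℕ) :
    (Mn F n a b * wX F n i - wX F n i * Mn F n a b) * wY F n i
      = (b i : F) • Mn F n a b := by
  rw [Mn_mul_wX, wX_mul_Mn, add_sub_cancel_left, smul_mul_assoc, Mn_mul_wY]
  rcases eq_or_ne (b i) 0 with h | h
  · rw [h]
    simp
  · rw [update_update_cancel h, ← Nat.cast_smul_eq_nsmul F]

/-- The inner-derivation operator `w ↦ xᵢ (yᵢ w − w yᵢ)`, as a linear map. -/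
noncomputable def EL (F : Type*) [Field F] (n : ℕ) (i : Fin n) :
    WeylAlgebra F n →ₗ[F] WeylAlgebra F n :=
  LinearMap.mulLeft F (wX F n i) ∘ₗ
    (LinearMap.mulLeft F (wY F n i) - LinearMap.mulRight F (wY F n i))

/-- The inner-derivation operator `w ↦ (w xᵢ − xᵢ w) yᵢ`, as a linear map. -/
noncomputable def GLw (F : Type*) [Field F] (n : ℕ) (i : Fin n) :
    WeylAlgebra F n →ₗ[F] WeylAlgebra F n :=
  LinearMap.mulRight F (wY F n i) ∘ₗ
    (LinearMap.mulRight F (wX F n i) - LinearMap.mulLeft F (wX F n i))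

theorem EL_apply (i : Fin n) (w : WeylAlgebra F n) :
    EL F n i w = wX F n i * (wY F n i * w - w * wY F n i) := rfl

theorem GL_apply (i : Fin n) (w : WeylAlgebra F n) :
    GLw F n i w = (w * wX F n i - wX F n i * w) * wY F n i := rfl

theorem EL_Mn (i : Fin n) (a b : Fin n → ℕ) :
    EL F n i (Mn F n a b) = (a i : F) • Mn F n a b := by
  rw [EL_apply, Ei_Mn]

theorem GL_Mn (i : Fin n) (a b : Fin n → ℕ) :
    GLw F n i (Mn F n a b) = (b i : F) • Mn F n a b := by
  rw [GL_apply, Gi_Mn]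

/-- Evaluation of the polynomial model at `1`. -/
noncomputable def Phi (F : Type*) [Field F] (n : ℕ) :
    WeylAlgebra F n →ₗ[F] MvPolynomial (Fin n ⊕ Fin n) F where
  toFun z := Wrep F n z 1
  map_add' x y := by simp [_root_.map_add]
  map_smul' c x := by simp [_root_.map_smul]

theorem Phi_Mn (a b : Fin n → ℕ) :
    Phi F n (Mn F n a b) = monomial (dm a b) (1 : F) := Wrep_Mn_one a b

theorem Mn_mem_adjoin (p : ℕ) (a b : Fin n → ℕ) (h1 : ∀ i, p ∣ a i) (h2 : ∀ i, p ∣ b i) :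
    Mn F n a b ∈ Algebra.adjoin F
      ((Set.range fun i => wX F n i ^ p) ∪ (Set.range fun i => wY F n i ^ p)) := by
  apply mul_mem
  · apply Subalgebra.list_prod_mem
    intro x hx
    rw [List.mem_ofFn] at hx
    obtain ⟨k, rfl⟩ := hx
    obtain ⟨m, hm⟩ := h1 k
    show wX F n k ^ a k ∈ _
    rw [hm, pow_mul]
    apply Subalgebra.pow_mem
    apply Algebra.subset_adjoin
    exact Or.inl ⟨k, rfl⟩
  · apply Subalgebra.list_prod_mem
    intro x hx
    rw [List.mem_ofFn] at hx
    obtain ⟨k, rfl⟩ := hx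
    obtain ⟨m, hm⟩ := h2 k
    show wY F n k ^ b k ∈ _
    rw [hm, pow_mul]
    apply Subalgebra.pow_mem
    apply Algebra.subset_adjoin
    exact Or.inr ⟨k, rfl⟩

theorem nsmul_p_eq_zero (p : ℕ) [CharP F p] (w : WeylAlgebra F n) : p • w = 0 := by
  rw [← Nat.cast_smul_eq_nsmul F, CharP.cast_eq_zero F p, zero_smul]

theorem wXp_mem_center (p : ℕ) [CharP F p] (i : Fin n) :
    wX F n i ^ p ∈ Subalgebra.center F (WeylAlgebra F n) := by
  apply mem_center_of_commute
  · exact fun j => ((wX_comm j i).pow_right p).symm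
  · intro j
    rcases eq_or_ne j i with rfl | hj
    · have h := comm_pow_of_comm_one (wYX_self (F := F) (n := n) j) p
      rw [nsmul_p_eq_zero, add_zero] at h
      exact (show Commute (wY F n j) (wX F n j ^ p) from h).symm
    · exact ((wYX_of_ne hj).pow_right p).symm

theorem wYp_mem_center (p : ℕ) [CharP F p] (i : Fin n) :
    wY F n i ^ p ∈ Subalgebra.center F (WeylAlgebra F n) := by
  apply mem_center_of_commute
  · intro j
    rcases eq_or_ne j i with rfl | hj
    · have h := pow_comm_of_comm_one (wYX_self (F := F) (n := n) j) p
      rw [nsmul_p_eq_zero, add_zero] at h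
      exact h
    · exact (wYX_of_ne (Ne.symm hj)).pow_left p
  · exact fun j => ((wY_comm j i).pow_right p).symm

end Final

/-- In characteristic `p > 0`, the center of the Weyl algebra `A_n(F)` is the `F`-subalgebra
generated by `x₁ᵖ,…,xₙᵖ, y₁ᵖ,…,yₙᵖ`. -/
theorem center_weylAlgebra_eq_adjoin_pth_powers
    (p n : ℕ) (hn : 1 ≤ n) (F : Type*) [Field F] [CharP F p] (hp : 0 < p) :
    Subalgebra.center F (WeylAlgebra F n) =
      Algebra.adjoin F
        ((Set.range fun i => wX F n i ^ p) ∪ (Set.range fun i => wY F n i ^ p)) := by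
  apply le_antisymm
  · intro z hz
    have hzc : ∀ g : WeylAlgebra F n, g * z = z * g := Subalgebra.mem_center_iff.mp hz
    have hzS : z ∈ Submodule.span F
        (Set.range fun ab : (Fin n → ℕ) × (Fin n → ℕ) => Mn F n ab.1 ab.2) := by
      have := mem_SM z
      rwa [SM] at this
    obtain ⟨c, hc⟩ := Finsupp.mem_span_range_iff_exists_finsupp.mp hzS
    have hEL : ∀ i, EL F n i z = 0 := by
      intro i
      rw [EL_apply, hzc (wY F n i), sub_self, mul_zero]
    have hGL : ∀ i, GLw F n i z = 0 := by
      intro i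
      rw [GL_apply, ← hzc (wX F n i), sub_self, zero_mul]
    have key : ∀ (T : WeylAlgebra F n →ₗ[F] WeylAlgebra F n)
        (e : (Fin n → ℕ) → (Fin n → ℕ) → ℕ),
        (∀ a b, T (Mn F n a b) = ((e a b : F)) • Mn F n a b) → T z = 0 →
        ∀ ab ∈ c.support, (e ab.1 ab.2 : F) = 0 := by
      intro T e hT hTz
      have hsum : (∑ ab ∈ c.support,
          (c ab * (e ab.1 ab.2 : F)) • MvPolynomial.monomial (dm ab.1 ab.2) (1 : F)) = 0 := by
        have h0 : Phi F n (T z) = 0 := by rw [hTz, map_zero]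
        rw [← hc, Finsupp.sum, _root_.map_sum, _root_.map_sum] at h0
        rw [← h0]
        apply Finset.sum_congr rfl
        intro ab _
        rw [map_smul T, hT ab.1 ab.2, map_smul (Phi F n), map_smul (Phi F n), Phi_Mn,
          smul_smul]
      intro ab hab
      have hli := linearIndependent_iff'.mp mon_li c.support
        (fun ab => c ab * (e ab.1 ab.2 : F)) hsum ab hab
      rcases mul_eq_zero.mp hli with h | h
      · exact absurd h (Finsupp.mem_support_iff.mp hab)
      · exact h
    rw [← hc, Finsupp.sum]
    apply sum_mem
    intro ab hab
    apply Subalgebra.smul_mem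
    apply Mn_mem_adjoin p
    · intro i
      have h := key (EL F n i) (fun a _ => a i) (fun a b => EL_Mn i a b) (hEL i) ab hab
      exact (CharP.cast_eq_zero_iff F p _).mp h
    · intro i
      have h := key (GLw F n i) (fun _ b => b i) (fun a b => GL_Mn i a b) (hGL i) ab hab
      exact (CharP.cast_eq_zero_iff F p _).mp h
  · apply Algebra.adjoin_le
    rintro u (⟨i, rfl⟩ | ⟨i, rfl⟩)
    · exact wXp_mem_center p i
    · exact wYp_mem_center p i
end

section
/- Let Q be a division ring and let G be a finite group acting on Q by ring automorphisms such that every non-identity element of G acts by a non-inner automorphism (i.e., for g ≠ 1 there is no nonzero q ∈ Q with g·a = q a q^{-1} for all a ∈ Q). Then the center of the division subring of invariants equals the G-invariants of the center: Z(Q^G) = Z(Q) ∩ Q^G. -/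
/-- The fixed subring `Q^G` of an action `ρ` of a group `G` on a ring `Q` by ring
automorphisms. -/
def fixedSubringOfAut {G : Type*} [Group G] {Q : Type*} [Ring Q] (ρ : G →* RingAut Q) :
    Subring Q where
  carrier := {a | ∀ g, ρ g a = a}
  zero_mem' := fun g => map_zero _
  one_mem' := fun g => map_one _
  add_mem' := fun ha hb g => by rw [map_add, ha g, hb g]
  neg_mem' := fun ha g => by rw [map_neg, ha g]
  mul_mem' := fun ha hb g => by rw [map_mul, ha g, hb g]

/-!
If `x ∈ Q^G` centralizes `Q^G`, it commutes with every trace `∑ g, ρ g a`, so the map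
`a ↦ ∑ g, (x * ρ g a - ρ g a * x)` vanishes. For pairwise mutually outer automorphisms `τ i`, a
vanishing sum `∑ i, E i ∘ τ i` of elementary operators `E i : y ↦ ∑ k, c k * y * d k` composed with
them forces every `E i = 0`; at `g = 1` this gives `x * b = b * x` for all `b`. The independence is
proved as Artin proves Dedekind's lemma, by shortening a relation; the only obstruction would be an
automorphism that is itself an elementary operator, and such an automorphism is inner.
-/

open Function

theorem ncard_support_lt_ncard_support {α M : Type*} [Finite α] [Zero M] {f g : α → M}
    (hfg : ∀ a, f a = 0 → g a = 0) {a₀ : α} (hf : f a₀ ≠ 0) (hg : g a₀ = 0) :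
    (support g).ncard < (support f).ncard :=
  Set.ncard_lt_ncard <| (Set.ssubset_iff_of_subset fun a => mt (hfg a)).mpr
    ⟨a₀, hf, fun h => h hg⟩

namespace RingAut

variable {Q : Type*} [DivisionRing Q]

def IsInner (σ : RingAut Q) : Prop := ∃ m : Q, m ≠ 0 ∧ ∀ a, σ a = m * a * m⁻¹

theorem isInner_of_eq_sum {κ : Type*} [Fintype κ] (μ : RingAut Q) (c d : κ → Q)
    (h : ∀ y, μ y = ∑ k, c k * y * d k) : μ.IsInner := by
  obtain ⟨k₀, hd₀⟩ : ∃ k₀, d k₀ ≠ 0 := by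
    by_contra! hd
    simpa [hd] using h 1
  by_cases hcomm : ∀ z, z * d k₀ = d k₀ * μ z
  · refine ⟨(d k₀)⁻¹, inv_ne_zero hd₀, fun a => ?_⟩
    rw [inv_inv, mul_assoc, hcomm, inv_mul_cancel_left₀ hd₀]
  push Not at hcomm
  obtain ⟨z, hz⟩ := hcomm
  set w := z * d k₀ - d k₀ * μ z
  have hw : w ≠ 0 := sub_ne_zero.mpr hz
  have hrel : ∀ y, ∑ k, c k * y * (z * d k - d k * μ z) = 0 := fun y => by
    have := h (y * z)
    rw [map_mul, h y, Finset.sum_mul] at this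
    simp only [mul_sub, Finset.sum_sub_distrib, ← mul_assoc, this, sub_self]
  -- subtracting a multiple of `hrel` kills the `k₀` term without creating new ones
  set d' := fun k => d k - (z * d k - d k * μ z) * w⁻¹ * d k₀
  have h' : ∀ y, μ y = ∑ k, c k * y * d' k := fun y => by
    have : ∑ k, c k * y * d' k
        = ∑ k, c k * y * d k - (∑ k, c k * y * (z * d k - d k * μ z)) * (w⁻¹ * d k₀) := by
      rw [Finset.sum_mul, ← Finset.sum_sub_distrib]
      exact Finset.sum_congr rfl fun k _ => by simp only [d']; noncomm_ring
    rw [this, hrel, zero_mul, sub_zero, h]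
  have hlt : (support d').ncard < (support d).ncard :=
    ncard_support_lt_ncard_support (fun k hk => by simp [d', hk]) hd₀
      (by simp [d', w, mul_inv_cancel₀ hw])
  exact isInner_of_eq_sum μ c d' h'
termination_by (support d).ncard

theorem sum_mul_mul_eq_zero_of_pairwise_not_isInner {ι κ : Type*} [Fintype ι] [Fintype κ]
    (τ : ι → RingAut Q) (hτ : Pairwise fun i j => ¬ (τ i * (τ j)⁻¹).IsInner) (c d : ι → κ → Q)
    (h : ∀ a, ∑ i, ∑ k, c i k * τ i a * d i k = 0) (i : ι) (y : Q) :
    ∑ k, c i k * y * d i k = 0 := by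
  set E : ι → Q → Q := fun j y => ∑ k, c j k * y * d j k
  show E i y = 0
  by_cases hc : ∀ j k, c j k = 0
  · simp [E, hc]
  push Not at hc
  obtain ⟨i₀, k₀, hc₀⟩ := hc
  have hshift : ∀ j ≠ i₀, ∀ u y,
      E j (τ j u * y) = c i₀ k₀ * τ i₀ u * (c i₀ k₀)⁻¹ * E j y := by
    intro j hj u y
    set s := c i₀ k₀ * τ i₀ u * (c i₀ k₀)⁻¹
    -- substituting `u * a` for `a` and subtracting `s` times the relation kills the `(i₀, k₀)` term
    set c' := fun i k => c i k * τ i u - s * c i k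
    have h' : ∀ a, ∑ i, ∑ k, c' i k * τ i a * d i k = 0 := fun a => by
      have : ∑ i, ∑ k, c' i k * τ i a * d i k
          = ∑ i, ∑ k, c i k * τ i (u * a) * d i k - s * ∑ i, ∑ k, c i k * τ i a * d i k := by
        simp only [Finset.mul_sum, ← Finset.sum_sub_distrib, map_mul]
        exact Finset.sum_congr rfl fun i _ => Finset.sum_congr rfl fun k _ => by
          simp only [c']; noncomm_ring
      rw [this, h, h, mul_zero, sub_zero]
    have hlt : (support (uncurry c')).ncard < (support (uncurry c)).ncard :=
      ncard_support_lt_ncard_support (a₀ := (i₀, k₀))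
        (fun ⟨i, k⟩ hik => by simp [c', show c i k = 0 from hik]) hc₀
        (by simp only [uncurry, c', s, mul_assoc, inv_mul_cancel₀ hc₀, mul_one, sub_self])
    have hsub : E j (τ j u * y) - s * E j y = ∑ k, c' j k * y * d j k := by
      simp only [E, c', Finset.mul_sum, ← Finset.sum_sub_distrib]
      exact Finset.sum_congr rfl fun k _ => by noncomm_ring
    rw [← sub_eq_zero, hsub]
    exact sum_mul_mul_eq_zero_of_pairwise_not_isInner τ hτ c' d h' j y
  have hvanish : ∀ j ≠ i₀, ∀ y, E j y = 0 := by
    intro j hj y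
    have hE1 : E j 1 = 0 := by
      by_contra he
      -- otherwise `hshift` exhibits `τ i₀ * (τ j)⁻¹` as an elementary operator
      refine hτ hj.symm (isInner_of_eq_sum _ (fun k => (c i₀ k₀)⁻¹ * c j k)
        (fun k => d j k * (E j 1)⁻¹ * c i₀ k₀) fun v => ?_)
      have hv := hshift j hj ((τ j)⁻¹ v) 1
      rw [mul_one, ← RingAut.mul_apply, mul_inv_cancel, RingAut.one_apply] at hv
      have hsum : ∑ k, (c i₀ k₀)⁻¹ * c j k * v * (d j k * (E j 1)⁻¹ * c i₀ k₀)
          = (c i₀ k₀)⁻¹ * E j v * ((E j 1)⁻¹ * c i₀ k₀) := by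
        simp only [E, Finset.mul_sum, Finset.sum_mul]
        exact Finset.sum_congr rfl fun k _ => by noncomm_ring
      rw [hsum, hv, RingAut.mul_apply]
      simp [mul_assoc, hc₀, he]
    simpa [hE1] using hshift j hj ((τ j)⁻¹ y) 1
  have hhead : ∀ a, E i₀ (τ i₀ a) = 0 := fun a => by
    rw [← h a, Finset.sum_eq_single i₀ (fun j _ hj => hvanish j hj _) (by simp)]
  obtain rfl | hi := eq_or_ne i i₀
  · simpa using hhead ((τ i)⁻¹ y)
  · exact hvanish i hi y
termination_by (support (uncurry c)).ncard

end RingAut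

theorem sum_apply_mem_fixedSubringOfAut {G Q : Type*} [Group G] [Fintype G] [Ring Q]
    (ρ : G →* RingAut Q) (a : Q) : ∑ g, ρ g a ∈ fixedSubringOfAut ρ := fun h => by
  simp only [map_sum, ← RingAut.mul_apply, ← map_mul]
  exact Fintype.sum_equiv (Equiv.mulLeft h) _ _ fun _ => rfl

/-- Let `Q` be a division ring and `G` a finite group acting on `Q` by ring automorphisms,
such that every non-identity element of `G` acts by a **non-inner** automorphism.  Then the
center of the division subring of invariants equals the `G`-invariants of the center:
`Z(Q^G) = Z(Q) ∩ Q^G` (as subrings of `Q`, the left side being realized as the elements of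
`Q^G` centralizing all of `Q^G`). -/
theorem center_fixedSubring_eq_of_outer
    {Q : Type*} [DivisionRing Q] {G : Type*} [Group G] [Finite G]
    (ρ : G →* RingAut Q)
    (houter : ∀ g : G, g ≠ 1 → ¬ ∃ q : Q, q ≠ 0 ∧ ∀ a : Q, ρ g a = q * a * q⁻¹) :
    Subring.centralizer ((fixedSubringOfAut ρ : Subring Q) : Set Q) ⊓ fixedSubringOfAut ρ =
      Subring.center Q ⊓ fixedSubringOfAut ρ := by
  have := Fintype.ofFinite G
  refine le_antisymm (fun x hx => ⟨?_, hx.2⟩)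
    (inf_le_inf_right _ (Subring.center_le_centralizer _))
  -- `![x, 1]`, `![1, -x]` encode the elementary operator `y ↦ x * y - y * x`
  have hcomm : ∀ a, ∑ g, ∑ k, ![x, 1] k * ρ g a * ![1, -x] k = 0 := fun a => by
    have := Subring.mem_centralizer_iff.mp hx.1 _ (sum_apply_mem_fixedSubringOfAut ρ a)
    simp only [Fin.sum_univ_two, Matrix.cons_val_zero, Matrix.cons_val_one, mul_one, one_mul,
      mul_neg, ← sub_eq_add_neg, Finset.sum_sub_distrib, ← Finset.mul_sum, ← Finset.sum_mul, this,
      sub_self]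
  have hpairwise : Pairwise fun g h => ¬ (ρ g * (ρ h)⁻¹).IsInner := fun g h hgh => by
    dsimp only
    rw [← map_inv, ← map_mul]
    exact houter _ (mul_inv_eq_one.not.mpr hgh)
  refine Subring.mem_center_iff.mpr fun b => (sub_eq_zero.mp ?_).symm
  simpa [Fin.sum_univ_two, ← sub_eq_add_neg] using
    RingAut.sum_mul_mul_eq_zero_of_pairwise_not_isInner ρ hpairwise _ _ hcomm 1 b
end
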